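/- arXiv:2312.17299 — 2 statements merged into one kernel-verified Lean document; each statement's English description precedes it below -/
import Mathlib

section
/- Let R be a ring and S a multiplicative subset of R generated by normal elements; set 𝔞 := { r ∈ R | srt = 0 for some s, t ∈ S } (an ideal of R with 𝔞 ≠ R), let π : R → R̄ := R/𝔞 and S̄ := π(S), so that S̄ is a (left and right) denominator set of R̄ with ass(S̄) = 0 and R⟨S⁻¹⟩ ≅ S̄⁻¹R̄. Assume the set min(𝔞) of primes of R minimal over 𝔞 is finite. Then: (1) the map min(𝔞) → Spec(S̄⁻¹R̄), 𝔭 ↦ S̄⁻¹π(𝔭), is an injection (each S̄⁻¹π(𝔭) is a prime ideal of S̄⁻¹R̄), and the prime radical satisfies 𝔫_{S̄⁻¹R̄} ⊆ S̄⁻¹𝔫_{R̄}; (2) writing π̃ : R̄ → R̃ := R̄/𝔫_{R̄} and S̃ := π̃(S̄), the set S̃ is a (left and right) denominator set of R̃ with ass(S̃) = 0, S̄⁻¹R̄ / S̄⁻¹𝔫_{R̄} ≅ S̃⁻¹R̃, and the map min(𝔞) → min(S̃⁻¹R̃), 𝔭 ↦ S̃⁻¹π̃(π(𝔭)), is a bijection.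 -/
/- Common framework: two-sided ideals, prime ideals, denominator sets and
   left localizations of (possibly noncommutative) rings, described
   axiomatically via their characteristic properties. -/

namespace BavulaMinPrimes

/-- A subset of a ring is a two-sided ideal. -/
def IsIdealSet {R : Type*} [Ring R] (I : Set R) : Prop :=
  (0 : R) ∈ I ∧ (∀ a ∈ I, ∀ b ∈ I, a + b ∈ I) ∧ (∀ a ∈ I, -a ∈ I) ∧
    ∀ a ∈ I, ∀ r : R, r * a ∈ I ∧ a * r ∈ I

/-- A (two-sided) prime ideal: a proper ideal `P` such that `A * B ⊆ P`
implies `A ⊆ P` or `B ⊆ P` for all ideals `A`, `B`. -/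
def IsPrimeIdealSet {R : Type*} [Ring R] (P : Set R) : Prop :=
  IsIdealSet P ∧ P ≠ Set.univ ∧
    ∀ A B : Set R, IsIdealSet A → IsIdealSet B →
      (∀ a ∈ A, ∀ b ∈ B, a * b ∈ P) → A ⊆ P ∨ B ⊆ P

/-- A completely prime ideal: the factor ring is a domain. -/
def IsCompletelyPrimeIdealSet {R : Type*} [Ring R] (P : Set R) : Prop :=
  IsIdealSet P ∧ P ≠ Set.univ ∧ ∀ a b : R, a * b ∈ P → a ∈ P ∨ b ∈ P

/-- A minimal prime ideal of a ring. -/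
def IsMinimalPrimeIdealSet {R : Type*} [Ring R] (P : Set R) : Prop :=
  IsPrimeIdealSet P ∧ ∀ P' : Set R, IsPrimeIdealSet P' → P' ⊆ P → P' = P

/-- A prime minimal over an ideal `A`. -/
def IsMinimalPrimeOver {R : Type*} [Ring R] (A P : Set R) : Prop :=
  IsPrimeIdealSet P ∧ A ⊆ P ∧
    ∀ P' : Set R, IsPrimeIdealSet P' → A ⊆ P' → P' ⊆ P → P' = P

/-- The set `min(R)` of minimal primes of `R`. -/
def minPrimes (R : Type*) [Ring R] : Set (Set R) := { P | IsMinimalPrimeIdealSet P }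

/-- The prime radical: intersection of all prime ideals. -/
def primeRadicalSet (R : Type*) [Ring R] : Set R :=
  { r : R | ∀ P : Set R, IsPrimeIdealSet P → r ∈ P }

/-- A ring is semiprime if its prime radical is zero. -/
def IsSemiprimeRing (R : Type*) [Ring R] : Prop := primeRadicalSet R = {0}

/-- A ring is prime if its zero ideal is a prime ideal. -/
def IsPrimeRing (R : Type*) [Ring R] : Prop := IsPrimeIdealSet ({0} : Set R)

/-- A multiplicative subset: `1 ∈ S`, `0 ∉ S`, closed under multiplication. -/
def IsMulSet {R : Type*} [Ring R] (S : Set R) : Prop :=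
  (1 : R) ∈ S ∧ (0 : R) ∉ S ∧ ∀ s ∈ S, ∀ t ∈ S, s * t ∈ S

/-- The left Ore condition: `S r ∩ R s ≠ ∅`. -/
def LeftOre {R : Type*} [Ring R] (S : Set R) : Prop :=
  ∀ r : R, ∀ s ∈ S, ∃ s' ∈ S, ∃ r' : R, s' * r = r' * s

/-- The right Ore condition: `r S ∩ s R ≠ ∅`. -/
def RightOre {R : Type*} [Ring R] (S : Set R) : Prop :=
  ∀ r : R, ∀ s ∈ S, ∃ s' ∈ S, ∃ r' : R, r * s' = s * r'

/-- A left denominator set: a left Ore multiplicative set such that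
`r s = 0` (with `s ∈ S`) implies `t r = 0` for some `t ∈ S`. -/
def IsLeftDenominatorSet {R : Type*} [Ring R] (S : Set R) : Prop :=
  IsMulSet S ∧ LeftOre S ∧ ∀ r : R, ∀ s ∈ S, r * s = 0 → ∃ t ∈ S, t * r = 0

/-- A right denominator set. -/
def IsRightDenominatorSet {R : Type*} [Ring R] (S : Set R) : Prop :=
  IsMulSet S ∧ RightOre S ∧ ∀ r : R, ∀ s ∈ S, s * r = 0 → ∃ t ∈ S, r * t = 0

/-- `ass_l(S) = { r | s r = 0 for some s ∈ S }`. -/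
def lAss {R : Type*} [Ring R] (S : Set R) : Set R := { r : R | ∃ s ∈ S, s * r = 0 }

/-- `f : R →+* Q` realizes `Q` as the left localization `S⁻¹R`:
elements of `S` become units, every element of `Q` is a left fraction
`(f s)⁻¹ (f r)`, and the kernel of `f` is `ass_l(S)`.  These properties
characterize `S⁻¹R` up to a unique `R`-isomorphism. -/
structure IsLeftLocalization {R Q : Type*} [Ring R] [Ring Q]
    (S : Set R) (f : R →+* Q) : Prop where
  isUnit : ∀ s ∈ S, IsUnit (f s)
  surj : ∀ q : Q, ∃ s ∈ S, ∃ r : R, f s * q = f r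
  ker : ∀ r : R, f r = 0 ↔ r ∈ lAss S

/-- `S⁻¹I = { s⁻¹ a | s ∈ S, a ∈ I }` as a subset of the localization `Q`:
`q ∈ S⁻¹I` iff `f s * q = f a` for some `s ∈ S`, `a ∈ I`. -/
def locSet {R Q : Type*} [Ring R] [Ring Q] (f : R →+* Q) (S : Set R)
    (I : Set R) : Set Q :=
  { q : Q | ∃ s ∈ S, ∃ a ∈ I, f s * q = f a }

/-- A normal element: `R n = n R`. -/
def IsNormalElement {R : Type*} [Ring R] (n : R) : Prop :=
  (∀ r : R, ∃ r' : R, r * n = n * r') ∧ ∀ r : R, ∃ r' : R, n * r = r' * n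

/-- A prime rich ring: every ideal contains a finite product of prime ideals
containing it (the empty product being the whole ring). -/
def IsPrimeRich (R : Type*) [Ring R] : Prop :=
  ∀ A : Set R, IsIdealSet A →
    ∃ (n : ℕ) (P : Fin n → Set R),
      (∀ i, IsPrimeIdealSet (P i) ∧ A ⊆ P i) ∧
      ∀ x : Fin n → R, (∀ i, x i ∈ P i) → (List.ofFn x).prod ∈ A

/-- An ideal which is finitely generated as a right `R`-module. -/
def IsFGRightIdeal {R : Type*} [Ring R] (I : Set R) : Prop :=
  ∃ (m : ℕ) (g : Fin m → R), (∀ i, g i ∈ I) ∧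
    ∀ x ∈ I, ∃ c : Fin m → R, x = ∑ i, g i * c i

/-- `𝔞 = { r ∈ R | s r t = 0 for some s, t ∈ S }`. -/
def twoSidedAss {R : Type*} [Ring R] (S : Set R) : Set R :=
  { r : R | ∃ s ∈ S, ∃ t ∈ S, s * r * t = 0 }

/-! The heart of the proof is that in a ring with finitely many minimal primes a regular normal
element `t` lies in no minimal prime `P`. Conjugation by `t` (`a t = t σ(a)`) is a ring
automorphism permuting the finitely many minimal primes, so `σ^d P = P` for some `d > 0`. If
`t ∈ P`, the elements `t^{dj} m` with `m ∉ P` form an m-system containing `t^d` and the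
complement of `P`; a prime maximal away from it lies in `P`, hence equals `P` by minimality,
which is absurd since `t^d ∈ P`.

Applied to `R̄ = R/𝔞`, whose minimal primes are the images of `min(𝔞)`, and to `R̃ = R̄/𝔫_{R̄}`,
this shows that the minimal primes avoid the denominator set, so they localize to primes and
are recovered by contraction. In the semiprime ring `R̃` the localized minimal primes intersect
in `S̃⁻¹𝔫_{R̃} = 0`, so every prime of `S̃⁻¹R̃` contains one of them; this identifies
`min(S̃⁻¹R̃)`. The map `S̄⁻¹R̄ → S̃⁻¹R̃` comes from the universal property of Ore localization. -/

open scoped Pointwise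

section Ideals

variable {R : Type*} [Ring R] {I P : Set R}

theorem IsIdealSet.zero_mem (hI : IsIdealSet I) : (0 : R) ∈ I := hI.1

theorem IsIdealSet.add_mem (hI : IsIdealSet I) {a b : R} (ha : a ∈ I) (hb : b ∈ I) :
    a + b ∈ I :=
  hI.2.1 a ha b hb

theorem IsIdealSet.neg_mem (hI : IsIdealSet I) {a : R} (ha : a ∈ I) : -a ∈ I := hI.2.2.1 a ha

theorem IsIdealSet.mul_mem_left (hI : IsIdealSet I) (r : R) {a : R} (ha : a ∈ I) : r * a ∈ I :=
  (hI.2.2.2 a ha r).1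

theorem IsIdealSet.mul_mem_right (hI : IsIdealSet I) (r : R) {a : R} (ha : a ∈ I) : a * r ∈ I :=
  (hI.2.2.2 a ha r).2

theorem IsPrimeIdealSet.one_notMem (hP : IsPrimeIdealSet P) : (1 : R) ∉ P := fun h =>
  hP.2.1 (Set.eq_univ_of_forall fun r => by simpa using hP.1.mul_mem_left r h)

theorem isIdealSet_zero : IsIdealSet ({0} : Set R) :=
  ⟨rfl, by rintro _ rfl _ rfl; simp, by rintro _ rfl; simp, by rintro _ rfl r; simp⟩

theorem IsIdealSet.add {J : Set R} (hI : IsIdealSet I) (hJ : IsIdealSet J) :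
    IsIdealSet (I + J) := by
  refine ⟨⟨0, hI.zero_mem, 0, hJ.zero_mem, add_zero 0⟩, ?_, ?_, ?_⟩
  · rintro _ ⟨a, ha, b, hb, rfl⟩ _ ⟨a', ha', b', hb', rfl⟩
    exact ⟨a + a', hI.add_mem ha ha', b + b', hJ.add_mem hb hb', add_add_add_comm a a' b b'⟩
  · rintro _ ⟨a, ha, b, hb, rfl⟩
    exact ⟨-a, hI.neg_mem ha, -b, hJ.neg_mem hb, (neg_add a b).symm⟩
  · rintro _ ⟨a, ha, b, hb, rfl⟩ r
    exact ⟨⟨r * a, hI.mul_mem_left r ha, r * b, hJ.mul_mem_left r hb, (mul_add r a b).symm⟩,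
      ⟨a * r, hI.mul_mem_right r ha, b * r, hJ.mul_mem_right r hb, (add_mul a b r).symm⟩⟩

theorem isIdealSet_sInter {C : Set (Set R)} (hC : ∀ I ∈ C, IsIdealSet I) : IsIdealSet (⋂₀ C) :=
  ⟨fun I hI => (hC I hI).zero_mem, fun _ ha _ hb I hI => (hC I hI).add_mem (ha I hI) (hb I hI),
    fun _ ha I hI => (hC I hI).neg_mem (ha I hI),
    fun _ ha r => ⟨fun I hI => (hC I hI).mul_mem_left r (ha I hI),
      fun I hI => (hC I hI).mul_mem_right r (ha I hI)⟩⟩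

theorem isIdealSet_sUnion_of_isChain {C : Set (Set R)} (hchain : IsChain (· ⊆ ·) C)
    (hne : C.Nonempty) (hC : ∀ I ∈ C, IsIdealSet I) : IsIdealSet (⋃₀ C) := by
  obtain ⟨I₀, hI₀⟩ := hne
  refine ⟨⟨I₀, hI₀, (hC I₀ hI₀).zero_mem⟩, ?_, ?_, ?_⟩
  · rintro a ⟨I, hI, haI⟩ b ⟨J, hJ, hbJ⟩
    rcases hchain.total hI hJ with hIJ | hJI
    · exact ⟨J, hJ, (hC J hJ).add_mem (hIJ haI) hbJ⟩
    · exact ⟨I, hI, (hC I hI).add_mem haI (hJI hbJ)⟩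
  · rintro a ⟨I, hI, haI⟩
    exact ⟨I, hI, (hC I hI).neg_mem haI⟩
  · rintro a ⟨I, hI, haI⟩ r
    exact ⟨⟨I, hI, (hC I hI).mul_mem_left r haI⟩, ⟨I, hI, (hC I hI).mul_mem_right r haI⟩⟩

theorem IsPrimeIdealSet.mem_or_mem_of_forall_mul_mul_mem (hP : IsPrimeIdealSet P) {x y : R}
    (h : ∀ r, x * r * y ∈ P) : x ∈ P ∨ y ∈ P := by
  -- the largest ideal `X` with `X R y ⊆ P` and the largest ideal `Y` with `X Y ⊆ P`
  let X : Set R := {a | ∀ r, a * r * y ∈ P}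
  let Y : Set R := {b | ∀ a ∈ X, a * b ∈ P}
  have hX : IsIdealSet X := by
    refine ⟨fun r => by simpa using hP.1.zero_mem, fun a ha b hb r => ?_, fun a ha r => ?_,
      fun a ha c => ⟨fun r => ?_, fun r => ?_⟩⟩
    · simpa [add_mul] using hP.1.add_mem (ha r) (hb r)
    · simpa using hP.1.neg_mem (ha r)
    · simpa [mul_assoc] using hP.1.mul_mem_left c (ha r)
    · simpa [mul_assoc] using ha (c * r)
  have hY : IsIdealSet Y := by
    refine ⟨fun a _ => by simpa using hP.1.zero_mem, fun b hb b' hb' a ha => ?_,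
      fun b hb a ha => ?_, fun b hb c => ⟨fun a ha => ?_, fun a ha => ?_⟩⟩
    · simpa [mul_add] using hP.1.add_mem (hb a ha) (hb' a ha)
    · simpa using hP.1.neg_mem (hb a ha)
    · simpa [mul_assoc] using hb (a * c) (hX.mul_mem_right c ha)
    · simpa [mul_assoc] using hP.1.mul_mem_right c (hb a ha)
  exact (hP.2.2 X Y hX hY fun a ha b hb => hb a ha).imp (fun hXP => hXP h)
    fun hYP => hYP fun a ha => by simpa using ha 1

theorem isPrimeIdealSet_of_forall_mul_mul_mem (hI : IsIdealSet I) (hne : I ≠ Set.univ)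
    (h : ∀ x y, (∀ r, x * r * y ∈ I) → x ∈ I ∨ y ∈ I) : IsPrimeIdealSet I := by
  refine ⟨hI, hne, fun X Y hX _ hXY => or_iff_not_imp_left.2 fun hXI y hy => ?_⟩
  obtain ⟨x, hx, hxI⟩ := Set.not_subset.1 hXI
  exact (h x y fun r => hXY _ (hX.mul_mem_right r hx) y hy).resolve_left hxI

def IsMSystem (N : Set R) : Prop := ∀ a ∈ N, ∀ b ∈ N, ∃ r, a * r * b ∈ N

theorem IsPrimeIdealSet.isMSystem_compl (hP : IsPrimeIdealSet P) : IsMSystem Pᶜ :=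
  fun x hx y hy => by
    by_contra! h
    exact (hP.mem_or_mem_of_forall_mul_mul_mem fun r => not_not.1 (h r)).elim hx hy

theorem exists_isPrimeIdealSet_disjoint {N : Set R} (hN : IsMSystem N) (hne : N.Nonempty)
    (h0 : (0 : R) ∉ N) : ∃ P, IsPrimeIdealSet P ∧ Disjoint P N := by
  obtain ⟨M, -, hM⟩ := zorn_subset_nonempty {I : Set R | IsIdealSet I ∧ Disjoint I N}
    (fun C hC hchain hCne => ⟨⋃₀ C,
      ⟨isIdealSet_sUnion_of_isChain hchain hCne fun I hI => (hC hI).1,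
        Set.disjoint_sUnion_left.2 fun I hI => (hC hI).2⟩,
      fun _ => Set.subset_sUnion_of_mem⟩)
    {0} ⟨isIdealSet_zero, Set.disjoint_singleton_left.2 h0⟩
  obtain ⟨hMI, hMN⟩ := hM.prop
  have meets : ∀ X, IsIdealSet X → ¬ X ⊆ M → ∃ a ∈ X, ∃ m ∈ M, a + m ∈ N := by
    intro X hX hXM
    by_contra! h
    have hXMN : Disjoint (X + M) N :=
      Set.disjoint_left.2 fun _ ⟨a, ha, m, hm, hx⟩ => hx ▸ h a ha m hm
    have := hM.le_of_ge ⟨hX.add hMI, hXMN⟩ fun m hm => ⟨0, hX.zero_mem, m, hm, zero_add m⟩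
    exact hXM fun x hx => this ⟨x, hx, 0, hMI.zero_mem, add_zero x⟩
  refine ⟨M, ⟨hMI, fun hM1 => ?_, fun X Y hX hY hXY => ?_⟩, hMN⟩
  · obtain ⟨n, hn⟩ := hne
    exact Set.disjoint_left.1 hMN (hM1 ▸ Set.mem_univ n) hn
  · by_contra hXY'
    rw [not_or] at hXY'
    obtain ⟨a, ha, m, hm, han⟩ := meets X hX hXY'.1
    obtain ⟨b, hb, m', hm', hbn⟩ := meets Y hY hXY'.2
    obtain ⟨r, hr⟩ := hN _ han _ hbn
    refine Set.disjoint_left.1 hMN ?_ hr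
    rw [show (a + m) * r * (b + m') = a * r * b + (a * r * m' + m * r * (b + m')) by noncomm_ring]
    exact hMI.add_mem (hXY _ (hX.mul_mem_right r ha) b hb)
      (hMI.add_mem (hMI.mul_mem_left _ hm') (hMI.mul_mem_right _ (hMI.mul_mem_right r hm)))

theorem IsMinimalPrimeIdealSet.disjoint_of_compl_subset (hP : IsMinimalPrimeIdealSet P)
    {N : Set R} (hN : IsMSystem N) (h0 : (0 : R) ∉ N) (hPN : Pᶜ ⊆ N) : Disjoint P N := by
  obtain ⟨P', hP', hP'N⟩ := exists_isPrimeIdealSet_disjoint hN ⟨1, hPN hP.1.one_notMem⟩ h0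
  have hP'P : P' ⊆ P := fun x hx =>
    by_contra fun hxP => Set.disjoint_left.1 hP'N hx (hPN hxP)
  rwa [← hP.2 P' hP' hP'P]

theorem exists_isPrimeIdealSet [Nontrivial R] : ∃ P : Set R, IsPrimeIdealSet P :=
  (exists_isPrimeIdealSet_disjoint (N := {1}) (by rintro _ rfl _ rfl; exact ⟨1, by simp⟩)
    (Set.singleton_nonempty 1) (by simp)).imp fun _ => And.left

theorem isPrimeIdealSet_sInter_of_isChain {C : Set (Set R)} (hchain : IsChain (· ⊆ ·) C)
    (hne : C.Nonempty) (hC : ∀ P ∈ C, IsPrimeIdealSet P) : IsPrimeIdealSet (⋂₀ C) := by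
  obtain ⟨P₀, hP₀⟩ := hne
  refine isPrimeIdealSet_of_forall_mul_mul_mem (isIdealSet_sInter fun P hP => (hC P hP).1)
    (fun h => (hC P₀ hP₀).one_notMem ((h ▸ Set.mem_univ 1 : (1 : R) ∈ ⋂₀ C) P₀ hP₀))
    fun x y h => ?_
  by_contra! hxy
  simp only [Set.mem_sInter, not_forall] at hxy
  obtain ⟨⟨P, hP, hxP⟩, ⟨P', hP', hyP'⟩⟩ := hxy
  rcases hchain.total hP hP' with hPP' | hP'P
  · exact ((hC P hP).mem_or_mem_of_forall_mul_mul_mem fun r => h r P hP).elim hxP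
      fun hy => hyP' (hPP' hy)
  · exact ((hC P' hP').mem_or_mem_of_forall_mul_mul_mem fun r => h r P' hP').elim
      (fun hx => hxP (hP'P hx)) hyP'

theorem IsPrimeIdealSet.exists_minimal_subset (hP : IsPrimeIdealSet P) :
    ∃ P₀, IsMinimalPrimeIdealSet P₀ ∧ P₀ ⊆ P := by
  obtain ⟨P₀, hP₀P, hmin⟩ := zorn_superset_nonempty {Q : Set R | IsPrimeIdealSet Q ∧ Q ⊆ P}
    (fun C hC hchain hne => ⟨⋂₀ C,
      ⟨isPrimeIdealSet_sInter_of_isChain hchain hne fun Q hQ => (hC hQ).1,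
        let ⟨Q, hQ⟩ := hne; (Set.sInter_subset_of_mem hQ).trans (hC hQ).2⟩,
      fun _ => Set.sInter_subset_of_mem⟩)
    P ⟨hP, subset_rfl⟩
  exact ⟨P₀, ⟨hmin.prop.1, fun Q hQ hQP₀ => hmin.eq_of_subset ⟨hQ, hQP₀.trans hP₀P⟩ hQP₀⟩, hP₀P⟩

theorem mem_primeRadicalSet_iff {r : R} :
    r ∈ primeRadicalSet R ↔ ∀ P, IsMinimalPrimeIdealSet P → r ∈ P :=
  ⟨fun hr P hP => hr P hP.1, fun hr _ hP =>
    let ⟨P₀, hP₀, hP₀P⟩ := hP.exists_minimal_subset; hP₀P (hr P₀ hP₀)⟩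

theorem IsPrimeIdealSet.exists_subset_of_sInter_subset {C : Set (Set R)} (hC : C.Finite)
    (hCI : ∀ I ∈ C, IsIdealSet I) (hP : IsPrimeIdealSet P) (h : ⋂₀ C ⊆ P) : ∃ I ∈ C, I ⊆ P := by
  induction C, hC using Set.Finite.induction_on with
  | empty => exact absurd (Set.univ_subset_iff.1 (by simpa using h)) hP.2.1
  | @insert I C _ _ ih =>
    rw [Set.sInter_insert] at h
    have hI := hCI I (Set.mem_insert I C)
    have hCI' : ∀ J ∈ C, IsIdealSet J := fun J hJ => hCI J (Set.mem_insert_of_mem I hJ)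
    rcases hP.2.2 I (⋂₀ C) hI (isIdealSet_sInter hCI') fun a ha b hb =>
        h ⟨hI.mul_mem_right b ha, (isIdealSet_sInter hCI').mul_mem_left a hb⟩ with hIP | hCP
    · exact ⟨I, Set.mem_insert I C, hIP⟩
    · obtain ⟨J, hJ, hJP⟩ := ih hCI' hCP
      exact ⟨J, Set.mem_insert_of_mem I hJ, hJP⟩

end Ideals

section Correspondence

variable {R A : Type*} [Ring R] [Ring A] {g : R →+* A}

theorem isIdealSet_preimage (g : R →+* A) {J : Set A} (hJ : IsIdealSet J) :
    IsIdealSet (g ⁻¹' J) :=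
  ⟨by simpa using hJ.zero_mem, fun _ ha _ hb => by simpa using hJ.add_mem ha hb,
    fun _ ha => by simpa using hJ.neg_mem ha,
    fun _ ha r => ⟨by simpa using hJ.mul_mem_left (g r) ha,
      by simpa using hJ.mul_mem_right (g r) ha⟩⟩

theorem isIdealSet_image (hg : Function.Surjective g) {I : Set R} (hI : IsIdealSet I) :
    IsIdealSet (g '' I) := by
  refine ⟨⟨0, hI.zero_mem, map_zero g⟩, ?_, ?_, ?_⟩
  · rintro _ ⟨a, ha, rfl⟩ _ ⟨b, hb, rfl⟩
    exact ⟨a + b, hI.add_mem ha hb, map_add g a b⟩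
  · rintro _ ⟨a, ha, rfl⟩
    exact ⟨-a, hI.neg_mem ha, map_neg g a⟩
  · rintro _ ⟨a, ha, rfl⟩ x
    obtain ⟨r, rfl⟩ := hg x
    exact ⟨⟨r * a, hI.mul_mem_left r ha, map_mul g r a⟩,
      ⟨a * r, hI.mul_mem_right r ha, map_mul g a r⟩⟩

theorem preimage_image_eq_of_ker_subset {I : Set R} (hI : IsIdealSet I)
    (hker : ∀ r, g r = 0 → r ∈ I) : g ⁻¹' (g '' I) = I := by
  refine Set.Subset.antisymm (fun a ⟨b, hb, hba⟩ => ?_) (Set.subset_preimage_image g I)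
  have : a - b ∈ I := hker _ (by rw [map_sub, hba, sub_self])
  simpa using hI.add_mem this hb

theorem isPrimeIdealSet_preimage_iff (hg : Function.Surjective g) {P : Set A} :
    IsPrimeIdealSet (g ⁻¹' P) ↔ IsPrimeIdealSet P := by
  have preimage_subset {X : Set A} : g ⁻¹' X ⊆ g ⁻¹' P ↔ X ⊆ P :=
    Set.preimage_subset_preimage_iff (by rw [hg.range_eq]; exact Set.subset_univ X)
  refine ⟨fun hP => ⟨Set.image_preimage_eq P hg ▸ isIdealSet_image hg hP.1, ?_, ?_⟩,
    fun hP => ⟨isIdealSet_preimage g hP.1, ?_, ?_⟩⟩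
  · rintro rfl
    exact hP.2.1 Set.preimage_univ
  · intro X Y hX hY hXY
    refine (hP.2.2 _ _ (isIdealSet_preimage g hX) (isIdealSet_preimage g hY)
      fun a ha b hb => ?_).imp preimage_subset.1 preimage_subset.1
    simpa using hXY _ ha _ hb
  · exact fun h => hP.one_notMem (by simpa using (h ▸ Set.mem_univ 1 : (1 : R) ∈ g ⁻¹' P))
  · intro X Y hX hY hXY
    have himage : ∀ a ∈ g '' X, ∀ b ∈ g '' Y, a * b ∈ P := by
      rintro _ ⟨a, ha, rfl⟩ _ ⟨b, hb, rfl⟩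
      simpa using hXY a ha b hb
    exact (hP.2.2 _ _ (isIdealSet_image hg hX) (isIdealSet_image hg hY) himage).imp
      Set.image_subset_iff.1 Set.image_subset_iff.1

theorem isPrimeIdealSet_image (hg : Function.Surjective g) {P : Set R} (hP : IsPrimeIdealSet P)
    (hker : ∀ r, g r = 0 → r ∈ P) : IsPrimeIdealSet (g '' P) :=
  (isPrimeIdealSet_preimage_iff hg).1 (by rwa [preimage_image_eq_of_ker_subset hP.1 hker])

variable {K : Set R}

theorem isMinimalPrimeIdealSet_image (hg : Function.Surjective g) (hK : ∀ r, g r = 0 ↔ r ∈ K)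
    {p : Set R} (hp : IsMinimalPrimeOver K p) : IsMinimalPrimeIdealSet (g '' p) := by
  have hker : ∀ r, g r = 0 → r ∈ p := fun r hr => hp.2.1 ((hK r).1 hr)
  refine ⟨isPrimeIdealSet_image hg hp.1 hker, fun P hP hPp => ?_⟩
  have hKP : K ⊆ g ⁻¹' P := fun r hr => by simpa [(hK r).2 hr] using hP.1.zero_mem
  have hPp' : g ⁻¹' P ⊆ p := by
    rw [← preimage_image_eq_of_ker_subset hp.1.1 hker]
    exact Set.preimage_mono hPp
  rw [← hp.2.2 _ ((isPrimeIdealSet_preimage_iff hg).2 hP) hKP hPp', Set.image_preimage_eq P hg]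

theorem isMinimalPrimeOver_preimage (hg : Function.Surjective g) (hK : ∀ r, g r = 0 ↔ r ∈ K)
    {P : Set A} (hP : IsMinimalPrimeIdealSet P) : IsMinimalPrimeOver K (g ⁻¹' P) := by
  refine ⟨(isPrimeIdealSet_preimage_iff hg).2 hP.1,
    fun r hr => by simpa [(hK r).2 hr] using hP.1.1.zero_mem, fun p hp hKp hpP => ?_⟩
  have hker : ∀ r, g r = 0 → r ∈ p := fun r hr => hKp ((hK r).1 hr)
  rw [← hP.2 _ (isPrimeIdealSet_image hg hp hker) (Set.image_subset_iff.2 hpP),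
    preimage_image_eq_of_ker_subset hp.1 hker]

theorem minPrimes_eq_image (hg : Function.Surjective g) (hK : ∀ r, g r = 0 ↔ r ∈ K) :
    minPrimes A = (g '' ·) '' {p | IsMinimalPrimeOver K p} :=
  Set.ext fun P => ⟨fun hP => ⟨g ⁻¹' P, isMinimalPrimeOver_preimage hg hK hP,
    Set.image_preimage_eq P hg⟩, fun ⟨_, hp, hpP⟩ => hpP ▸ isMinimalPrimeIdealSet_image hg hK hp⟩

theorem isMinimalPrimeOver_primeRadicalSet_iff {P : Set A} :
    IsMinimalPrimeOver (primeRadicalSet A) P ↔ IsMinimalPrimeIdealSet P :=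
  ⟨fun hP => ⟨hP.1, fun P' hP' hP'P => hP.2.2 P' hP' (fun _ hr => hr P' hP') hP'P⟩,
    fun hP => ⟨hP.1, fun _ hr => hr P hP.1, fun P' hP' _ hP'P => hP.2 P' hP' hP'P⟩⟩

theorem primeRadicalSet_eq_zero_of_ker {B : Type*} [Ring B] {h : A →+* B}
    (hh : Function.Surjective h) (hker : ∀ a, h a = 0 ↔ a ∈ primeRadicalSet A) :
    primeRadicalSet B = {0} := by
  refine Set.Subset.antisymm (fun b hb => ?_) (by rintro _ rfl P hP; exact hP.1.zero_mem)
  obtain ⟨a, rfl⟩ := hh b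
  refine (hker a).2 fun P hP => ?_
  have hkerP : ∀ x, h x = 0 → x ∈ P := fun x hx => (hker x).1 hx P hP
  rw [← preimage_image_eq_of_ker_subset hP.1 hkerP]
  exact hb _ (isPrimeIdealSet_image hh hP hkerP)

end Correspondence

section Normal

variable {R : Type*} [Ring R] {t : R} {P : Set R}

theorem IsNormalElement.map {A : Type*} [Ring A] {g : R →+* A} (hg : Function.Surjective g)
    (ht : IsNormalElement t) : IsNormalElement (g t) := by
  refine ⟨fun x => ?_, fun x => ?_⟩ <;> obtain ⟨r, rfl⟩ := hg x
  · obtain ⟨r', hr'⟩ := ht.1 r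
    exact ⟨g r', by rw [← map_mul, hr', map_mul]⟩
  · obtain ⟨r', hr'⟩ := ht.2 r
    exact ⟨g r', by rw [← map_mul, hr', map_mul]⟩

theorem isNormalElement_of_mem_image {A : Type*} [Ring A] {g : R →+* A}
    (hg : Function.Surjective g) {S : Set R} (hS : ∀ s ∈ S, IsNormalElement s) :
    ∀ t ∈ g '' S, IsNormalElement t := by
  rintro _ ⟨s, hs, rfl⟩
  exact (hS s hs).map hg

theorem IsPrimeIdealSet.mem_of_normal_mul_mem (hP : IsPrimeIdealSet P) (ht : IsNormalElement t)
    (htP : t ∉ P) {a : R} (h : t * a ∈ P) : a ∈ P :=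
  (hP.mem_or_mem_of_forall_mul_mul_mem fun r => by
    obtain ⟨r', hr'⟩ := ht.2 r
    rw [hr', mul_assoc]
    exact hP.1.mul_mem_left r' h).resolve_left htP

theorem IsPrimeIdealSet.mem_of_mul_normal_mem (hP : IsPrimeIdealSet P) (ht : IsNormalElement t)
    (htP : t ∉ P) {a : R} (h : a * t ∈ P) : a ∈ P :=
  (hP.mem_or_mem_of_forall_mul_mul_mem fun r => by
    obtain ⟨r', hr'⟩ := ht.1 r
    rw [mul_assoc, hr', ← mul_assoc]
    exact hP.1.mul_mem_right r' h).resolve_right htP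

theorem IsNormalElement.exists_ringAut (ht : IsNormalElement t) (hreg : IsRegular t) :
    ∃ σ : RingAut R, ∀ a, a * t = t * σ a := by
  choose σ hσ using ht.1
  choose τ hτ using ht.2
  have cancel_left {x y : R} (h : t * x = t * y) : x = y := hreg.1 h
  have cancel_right {x y : R} (h : x * t = y * t) : x = y := hreg.2 h
  exact ⟨{ toFun := σ, invFun := τ
           left_inv := fun a => cancel_right (by rw [← hτ, ← hσ])
           right_inv := fun a => cancel_left (by rw [← hσ, ← hτ])
           map_mul' := fun a b => cancel_left (by
             rw [← hσ, ← mul_assoc, ← hσ, mul_assoc, mul_assoc, ← hσ])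
           map_add' := fun a b => cancel_left (by rw [← hσ, mul_add, ← hσ, ← hσ, add_mul]) },
    hσ⟩

theorem mul_pow_eq_pow_mul_ringAut {σ : RingAut R} (hσ : ∀ a, a * t = t * σ a) (n : ℕ) (a : R) :
    a * t ^ n = t ^ n * (σ ^ n) a := by
  induction n generalizing a with
  | zero => simp
  | succ n ih =>
    rw [pow_succ, ← mul_assoc, ih, mul_assoc, hσ, ← mul_assoc, pow_succ' σ, RingAut.mul_apply]

theorem IsMinimalPrimeIdealSet.image_ringEquiv (hP : IsMinimalPrimeIdealSet P) (σ : R ≃+* R) :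
    IsMinimalPrimeIdealSet (σ '' P) := by
  rw [σ.image_eq_preimage_symm]
  refine ⟨(isPrimeIdealSet_preimage_iff (g := (σ.symm : R →+* R)) σ.symm.surjective).2 hP.1,
    fun Q hQ hQP => ?_⟩
  have hσQ : σ ⁻¹' Q ⊆ P := fun x hx => by simpa using hQP hx
  rw [← hP.2 _ ((isPrimeIdealSet_preimage_iff (g := (σ : R →+* R)) σ.surjective).2 hQ) hσQ]
  ext x
  simp

theorem IsMinimalPrimeIdealSet.exists_pow_mem_iff (hfin : (minPrimes R).Finite)
    (hP : IsMinimalPrimeIdealSet P) (σ : RingAut R) :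
    ∃ d > 0, ∀ a, (σ ^ d) a ∈ P ↔ a ∈ P := by
  obtain ⟨i, j, hij, h⟩ := hfin.exists_lt_map_eq_of_forall_mem
    (f := fun n : ℕ => ⇑(σ ^ n) '' P) fun n => hP.image_ringEquiv _
  have hd : ⇑(σ ^ (j - i)) '' P = P := by
    refine Set.image_injective.2 (σ ^ i).injective ?_
    simp only [Set.image_image, ← RingAut.mul_apply, ← pow_add, Nat.add_sub_cancel' hij.le]
    exact h.symm
  refine ⟨j - i, Nat.sub_pos_of_lt hij, fun a => ?_⟩
  conv_lhs => rw [← hd]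
  exact (σ ^ (j - i)).injective.mem_set_image

theorem IsMinimalPrimeIdealSet.notMem_of_mul_eq_mul_ringAut (hP : IsMinimalPrimeIdealSet P)
    {u : R} (hu : IsLeftRegular u) {ψ : RingAut R} (hψ : ∀ a, a * u = u * ψ a)
    (hψP : ∀ a, ψ a ∈ P ↔ a ∈ P) : u ∉ P := by
  have hψP' (i : ℕ) (a : R) : (ψ ^ i) a ∈ P ↔ a ∈ P := by
    induction i generalizing a with
    | zero => rfl
    | succ i ih => rw [pow_succ', RingAut.mul_apply, hψP, ih]
  let N : Set R := {x | ∃ (j : ℕ) (m : R), m ∉ P ∧ x = u ^ j * m}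
  have hPN : Pᶜ ⊆ N := fun m hm => ⟨0, m, hm, by simp⟩
  have h0N : (0 : R) ∉ N := by
    rintro ⟨j, m, hm, hjm⟩
    rw [isLeftRegular_iff_right_eq_zero_of_mul.1 (hu.pow j) m hjm.symm] at hm
    exact hm hP.1.1.zero_mem
  have hN : IsMSystem N := by
    rintro _ ⟨j, m, hm, rfl⟩ _ ⟨i, m', hm', rfl⟩
    obtain ⟨s, hs⟩ := hP.1.isMSystem_compl ((ψ ^ i) m) (mt (hψP' i m).1 hm) m' hm'
    refine ⟨(ψ ^ i).symm s, j + i, (ψ ^ i) m * s * m', hs, ?_⟩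
    -- `ψ ^ i` carries the middle factor past `u ^ i`
    calc u ^ j * m * (ψ ^ i).symm s * (u ^ i * m')
        = u ^ j * (m * (ψ ^ i).symm s * u ^ i) * m' := by noncomm_ring
      _ = u ^ (j + i) * ((ψ ^ i) m * s * m') := by
        rw [mul_pow_eq_pow_mul_ringAut hψ, map_mul, RingEquiv.apply_symm_apply, pow_add]
        noncomm_ring
  exact fun huP => Set.disjoint_left.1 (hP.disjoint_of_compl_subset hN h0N hPN) huP
    ⟨1, 1, hP.1.one_notMem, by simp⟩

theorem IsMinimalPrimeIdealSet.notMem_of_isNormalElement (hfin : (minPrimes R).Finite)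
    (hP : IsMinimalPrimeIdealSet P) (ht : IsNormalElement t) (hreg : IsRegular t) : t ∉ P := by
  obtain ⟨σ, hσ⟩ := ht.exists_ringAut hreg
  obtain ⟨d, hd, hdP⟩ := hP.exists_pow_mem_iff hfin σ
  have htd : t ^ d ∉ P :=
    hP.notMem_of_mul_eq_mul_ringAut (hreg.1.pow d) (mul_pow_eq_pow_mul_ringAut hσ d) hdP
  obtain ⟨e, rfl⟩ := Nat.exists_eq_succ_of_ne_zero hd.ne'
  exact fun htP => htd (pow_succ t e ▸ hP.1.1.mul_mem_left _ htP)

end Normal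

section Localization

variable {A Q : Type*} [Ring A] [Ring Q] {T : Set A} {f : A →+* Q}

theorem IsLeftLocalization.injective (hloc : IsLeftLocalization T f) (hass : lAss T = {0}) :
    Function.Injective f :=
  (injective_iff_map_eq_zero f).2 fun a ha => by simpa [hass] using (hloc.ker a).1 ha

theorem isRegular_of_mem (hT : IsLeftDenominatorSet T) (hass : lAss T = {0}) {t : A}
    (ht : t ∈ T) : IsRegular t := by
  have hzero {a : A} (h : a ∈ lAss T) : a = 0 := by rwa [hass] at h
  refine isRegular_iff_eq_zero_of_mul.2 ⟨fun a h => hzero ⟨t, ht, h⟩, fun a h => ?_⟩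
  obtain ⟨t', ht', h'⟩ := hT.2.2 a t ht h
  exact hzero ⟨t', ht', h'⟩

theorem isDenominatorSet_of_isRegular (hT : IsMulSet T) (hTn : ∀ t ∈ T, IsNormalElement t)
    (hreg : ∀ t ∈ T, IsRegular t) :
    IsLeftDenominatorSet T ∧ IsRightDenominatorSet T ∧ lAss T = {0} := by
  have hl (t) (ht : t ∈ T) := isLeftRegular_iff_right_eq_zero_of_mul.1 (hreg t ht).1
  have hr (t) (ht : t ∈ T) := isRightRegular_iff_left_eq_zero_of_mul.1 (hreg t ht).2
  refine ⟨⟨hT, fun r s hs => ?_, fun r s hs h => ⟨1, hT.1, by rw [hr s hs r h, mul_zero]⟩⟩,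
    ⟨hT, fun r s hs => ?_, fun r s hs h => ⟨1, hT.1, by rw [hl s hs r h, zero_mul]⟩⟩,
    Set.ext fun a => ⟨fun ⟨t, ht, h⟩ => hl t ht a h, fun h => ⟨1, hT.1, by rw [h, mul_zero]⟩⟩⟩
  · obtain ⟨r', hr'⟩ := (hTn s hs).2 r
    exact ⟨s, hs, r', hr'⟩
  · obtain ⟨r', hr'⟩ := (hTn s hs).1 r
    exact ⟨s, hs, r', hr'⟩

theorem isIdealSet_locSet (hT : IsMulSet T) (hTn : ∀ t ∈ T, IsNormalElement t)
    (hloc : IsLeftLocalization T f) {I : Set A} (hI : IsIdealSet I)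
    (hsat : ∀ t ∈ T, ∀ a, a * t ∈ I → a ∈ I) : IsIdealSet (locSet f T I) := by
  refine ⟨⟨1, hT.1, 0, hI.zero_mem, by simp⟩, ?_, ?_, ?_⟩
  · rintro q₁ ⟨s₁, hs₁, a₁, ha₁, h₁⟩ q₂ ⟨s₂, hs₂, a₂, ha₂, h₂⟩
    obtain ⟨c, hc⟩ := (hTn s₂ hs₂).2 s₁
    refine ⟨s₂ * s₁, hT.2.2 _ hs₂ _ hs₁, s₂ * a₁ + c * a₂,
      hI.add_mem (hI.mul_mem_left _ ha₁) (hI.mul_mem_left _ ha₂), ?_⟩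
    calc f (s₂ * s₁) * (q₁ + q₂) = f s₂ * (f s₁ * q₁) + f c * (f s₂ * q₂) := by
          rw [mul_add]
          congr 1
          · rw [map_mul, mul_assoc]
          · rw [hc, map_mul, mul_assoc]
      _ = f (s₂ * a₁ + c * a₂) := by rw [h₁, h₂, map_add, map_mul, map_mul]
  · rintro q ⟨s, hs, a, ha, h⟩
    exact ⟨s, hs, -a, hI.neg_mem ha, by rw [mul_neg, h, map_neg]⟩
  · rintro q ⟨s₁, hs₁, a₁, ha₁, h₁⟩ ρ
    obtain ⟨s₀, hs₀, r₀, h₀⟩ := hloc.surj ρ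
    constructor
    · obtain ⟨c, hc⟩ := (hTn s₁ hs₁).2 r₀
      refine ⟨s₁ * s₀, hT.2.2 _ hs₁ _ hs₀, c * a₁, hI.mul_mem_left c ha₁, ?_⟩
      calc f (s₁ * s₀) * (ρ * q) = f (s₁ * r₀) * q := by
            rw [map_mul, map_mul, mul_assoc, ← mul_assoc (f s₀), h₀, mul_assoc]
        _ = f (c * a₁) := by rw [hc, map_mul, mul_assoc, h₁, map_mul]
    · -- `a₁ s₀⁻¹ = s₀⁻¹ c` for the `c` with `s₀ a₁ = c s₀`, and `c ∈ I` by saturation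
      obtain ⟨c, hc⟩ := (hTn s₀ hs₀).2 a₁
      have hcI : c ∈ I := hsat s₀ hs₀ c (hc ▸ hI.mul_mem_left s₀ ha₁)
      refine ⟨s₀ * s₁, hT.2.2 _ hs₀ _ hs₁, c * r₀, hI.mul_mem_right r₀ hcI, ?_⟩
      calc f (s₀ * s₁) * (q * ρ) = f (s₀ * a₁) * ρ := by
            rw [map_mul, map_mul, mul_assoc, ← mul_assoc (f s₁), h₁, ← mul_assoc]
        _ = f (c * r₀) := by rw [hc, map_mul, mul_assoc, h₀, map_mul]

variable {P : Set A}

theorem IsPrimeIdealSet.map_mem_locSet_iff (hP : IsPrimeIdealSet P)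
    (hTn : ∀ t ∈ T, IsNormalElement t) (hPT : ∀ t ∈ T, t ∉ P) (hT1 : (1 : A) ∈ T)
    (hloc : IsLeftLocalization T f) (hass : lAss T = {0}) {a : A} :
    f a ∈ locSet f T P ↔ a ∈ P := by
  refine ⟨fun ⟨s, hs, b, hb, h⟩ => ?_, fun ha => ⟨1, hT1, a, ha, by simp⟩⟩
  rw [← map_mul] at h
  exact hP.mem_of_normal_mul_mem (hTn s hs) (hPT s hs) (hloc.injective hass h ▸ hb)

theorem IsPrimeIdealSet.preimage_locSet (hP : IsPrimeIdealSet P)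
    (hTn : ∀ t ∈ T, IsNormalElement t) (hPT : ∀ t ∈ T, t ∉ P) (hT1 : (1 : A) ∈ T)
    (hloc : IsLeftLocalization T f) (hass : lAss T = {0}) : f ⁻¹' locSet f T P = P :=
  Set.ext fun _ => hP.map_mem_locSet_iff hTn hPT hT1 hloc hass

theorem isPrimeIdealSet_locSet (hT : IsMulSet T) (hTn : ∀ t ∈ T, IsNormalElement t)
    (hloc : IsLeftLocalization T f) (hass : lAss T = {0}) (hP : IsPrimeIdealSet P)
    (hPT : ∀ t ∈ T, t ∉ P) : IsPrimeIdealSet (locSet f T P) := by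
  have hmem {a : A} : f a ∈ locSet f T P ↔ a ∈ P := hP.map_mem_locSet_iff hTn hPT hT.1 hloc hass
  -- an ideal of `Q` is the localization of its contraction
  have subset_locSet (X : Set Q) (hX : IsIdealSet X) (hXP : f ⁻¹' X ⊆ P) : X ⊆ locSet f T P :=
    fun q hq =>
      let ⟨s, hs, r, h⟩ := hloc.surj q
      ⟨s, hs, r, hXP (show f r ∈ X from h ▸ hX.mul_mem_left _ hq), h⟩
  refine ⟨isIdealSet_locSet hT hTn hloc hP.1
      (fun t ht _ => hP.mem_of_mul_normal_mem (hTn t ht) (hPT t ht)),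
    fun h => hP.one_notMem (hmem.1 (by rw [map_one, h]; trivial)), fun X Y hX hY hXY => ?_⟩
  refine (hP.2.2 _ _ (isIdealSet_preimage f hX) (isIdealSet_preimage f hY) fun a ha b hb =>
    hmem.1 ?_).imp (subset_locSet X hX) (subset_locSet Y hY)
  rw [map_mul]
  exact hXY _ ha _ hb

theorem mem_locSet_primeRadicalSet (hT : IsMulSet T) (hTn : ∀ t ∈ T, IsNormalElement t)
    (hloc : IsLeftLocalization T f) (hass : lAss T = {0})
    (havoid : ∀ P, IsMinimalPrimeIdealSet P → ∀ t ∈ T, t ∉ P) {q : Q}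
    (hq : ∀ P, IsMinimalPrimeIdealSet P → q ∈ locSet f T P) :
    q ∈ locSet f T (primeRadicalSet A) := by
  obtain ⟨s, hs, r, h⟩ := hloc.surj q
  refine ⟨s, hs, r, mem_primeRadicalSet_iff.2 fun P hP => ?_, h⟩
  have hPloc := isPrimeIdealSet_locSet hT hTn hloc hass hP.1 (havoid P hP)
  exact (hP.1.map_mem_locSet_iff hTn (havoid P hP) hT.1 hloc hass).1
    (h ▸ hPloc.1.mul_mem_left _ (hq P hP))

theorem primeRadicalSet_subset_locSet (hT : IsMulSet T) (hTn : ∀ t ∈ T, IsNormalElement t)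
    (hloc : IsLeftLocalization T f) (hass : lAss T = {0})
    (havoid : ∀ P, IsMinimalPrimeIdealSet P → ∀ t ∈ T, t ∉ P) :
    primeRadicalSet Q ⊆ locSet f T (primeRadicalSet A) := fun _ hq =>
  mem_locSet_primeRadicalSet hT hTn hloc hass havoid fun P hP =>
    hq _ (isPrimeIdealSet_locSet hT hTn hloc hass hP.1 (havoid P hP))

theorem minPrimes_eq_image_locSet (hT : IsMulSet T) (hTn : ∀ t ∈ T, IsNormalElement t)
    (hloc : IsLeftLocalization T f) (hass : lAss T = {0})
    (havoid : ∀ P, IsMinimalPrimeIdealSet P → ∀ t ∈ T, t ∉ P)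
    (hrad : primeRadicalSet A = {0}) (hfin : (minPrimes A).Finite) :
    minPrimes Q = locSet f T '' minPrimes A := by
  have hprime (P) (hP : P ∈ minPrimes A) : IsPrimeIdealSet (locSet f T P) :=
    isPrimeIdealSet_locSet hT hTn hloc hass hP.1 (havoid P hP)
  have hcontract (P) (hP : P ∈ minPrimes A) : f ⁻¹' locSet f T P = P :=
    hP.1.preimage_locSet hTn (havoid P hP) hT.1 hloc hass
  -- the localized minimal primes intersect in `S⁻¹(rad A) = 0`
  have hcontains (J : Set Q) (hJ : IsPrimeIdealSet J) : ∃ P ∈ minPrimes A, locSet f T P ⊆ J := by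
    have hinter : ⋂₀ (locSet f T '' minPrimes A) ⊆ J := fun q hq => by
      obtain ⟨s, hs, a, ha, h⟩ :=
        mem_locSet_primeRadicalSet hT hTn hloc hass havoid fun P hP => hq _ ⟨P, hP, rfl⟩
      rw [hrad, Set.mem_singleton_iff] at ha
      have hq0 : q = 0 := (hloc.isUnit s hs).mul_right_eq_zero.1 (by rw [h, ha, map_zero])
      exact hq0 ▸ hJ.1.zero_mem
    obtain ⟨_, ⟨P, hP, rfl⟩, hPJ⟩ := hJ.exists_subset_of_sInter_subset (hfin.image _)
      (by rintro _ ⟨P, hP, rfl⟩; exact (hprime P hP).1) hinter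
    exact ⟨P, hP, hPJ⟩
  ext J
  refine ⟨fun hJ => ?_, ?_⟩
  · obtain ⟨P, hP, hPJ⟩ := hcontains J hJ.1
    exact ⟨P, hP, hJ.2 _ (hprime P hP) hPJ⟩
  · rintro ⟨P, hP, rfl⟩
    refine ⟨hprime P hP, fun J hJ hJP => ?_⟩
    obtain ⟨P', hP', hP'J⟩ := hcontains J hJ
    have : P' = P := hP.2 P' hP'.1 (by
      rw [← hcontract P' hP', ← hcontract P hP]
      exact Set.preimage_mono (hP'J.trans hJP))
    exact hJP.antisymm (this ▸ hP'J)

end Localization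

section Lift

variable {A Q Q' : Type*} [Ring A] [Ring Q] [Ring Q'] {T : Set A} {f : A →+* Q}

open OreLocalization in
theorem IsLeftLocalization.exists_lift (hT : IsLeftDenominatorSet T)
    (hloc : IsLeftLocalization T f) (k : A →+* Q') (hk : ∀ t ∈ T, IsUnit (k t)) :
    ∃ φ : Q →+* Q', ∀ a, φ (f a) = k a := by
  let M : Submonoid A := ⟨⟨T, fun ha hb => hT.1.2.2 _ ha _ hb⟩, hT.1.1⟩
  obtain ⟨_⟩ : Nonempty (OreSet M) := nonempty_oreSet_iff.2
    ⟨fun r₁ r₂ s h => by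
      obtain ⟨t, ht, h0⟩ := hT.2.2 (r₁ - r₂) s s.2 (by rw [sub_mul, h, sub_self])
      exact ⟨⟨t, ht⟩, by rw [← sub_eq_zero, ← mul_sub]; exact h0⟩,
     fun r s => by
      obtain ⟨s', hs', r', h⟩ := hT.2.1 r s s.2
      exact ⟨r', ⟨s', hs'⟩, h⟩⟩
  -- `Q` is identified with Mathlib's Ore localization `M⁻¹A`, whose universal property gives `φ`
  have hfM : ∀ s : M, IsUnit ((f : A →* Q).comp M.subtype s) := fun s => hloc.isUnit s s.2
  have hf : ∀ s : M, f s = IsUnit.liftRight _ hfM s := fun _ => rfl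
  have he : Function.Bijective (universalHom f _ hf) := by
    refine ⟨(injective_iff_map_eq_zero _).2 fun x hx => ?_, fun q => ?_⟩
    · induction x with | _ r s
      rw [universalHom_apply, IsUnit.mul_right_eq_zero (Units.isUnit _)] at hx
      obtain ⟨t, ht, htr⟩ := (hloc.ker r).1 hx
      rw [← zero_oreDiv s, oreDiv_eq_iff]
      exact ⟨⟨t, ht⟩, t, by simp [htr], rfl⟩
    · obtain ⟨s, hs, r, h⟩ := hloc.surj q
      refine ⟨r /ₒ ⟨s, hs⟩, ?_⟩
      rw [universalHom_apply, Units.inv_mul_eq_iff_eq_mul]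
      exact h.symm
  let e := RingEquiv.ofBijective _ he
  have hkM : ∀ s : M, IsUnit ((k : A →* Q').comp M.subtype s) := fun s => hk s s.2
  have hk' : ∀ s : M, k s = IsUnit.liftRight _ hkM s := fun _ => rfl
  refine ⟨(universalHom k _ hk').comp e.symm.toRingHom, fun a => ?_⟩
  have : e.symm (f a) = numeratorHom a := e.symm_apply_eq.2 (universalHom_commutes (hf := hf)).symm
  rw [RingHom.comp_apply, RingEquiv.toRingHom_eq_coe, RingEquiv.coe_toRingHom, this]
  exact universalHom_commutes (hf := hk')

theorem IsLeftLocalization.exists_surjective_map (hT : IsLeftDenominatorSet T)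
    (hloc : IsLeftLocalization T f) {B : Type*} [Ring B] {h : A →+* B}
    (hh : Function.Surjective h) {I : Set A} (hker : ∀ a, h a = 0 ↔ a ∈ I)
    (hass' : lAss (h '' T) = {0}) {f' : B →+* Q'} (hloc' : IsLeftLocalization (h '' T) f') :
    ∃ φ : Q →+* Q', Function.Surjective φ ∧ (∀ q, φ q = 0 ↔ q ∈ locSet f T I) ∧
      ∀ a, φ (f a) = f' (h a) := by
  have hunit (t) (ht : t ∈ T) : IsUnit (f' (h t)) := hloc'.isUnit _ ⟨t, ht, rfl⟩
  obtain ⟨φ, hφ⟩ := hloc.exists_lift hT (f'.comp h) hunit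
  replace hφ (a : A) : φ (f a) = f' (h a) := hφ a
  refine ⟨φ, fun q' => ?_, fun q => ?_, hφ⟩
  · obtain ⟨_, ⟨t, ht, rfl⟩, b, hq'⟩ := hloc'.surj q'
    obtain ⟨a, rfl⟩ := hh b
    obtain ⟨u, hu⟩ := hloc.isUnit t ht
    refine ⟨↑u⁻¹ * f a, (hunit t ht).mul_left_cancel ?_⟩
    rw [hq', ← hφ, ← hφ, ← map_mul, ← mul_assoc, ← hu, u.mul_inv, one_mul]
  · have key (s) (hs : s ∈ T) (a) (hsa : f s * q = f a) : φ q = 0 ↔ a ∈ I := by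
      have hf'h : f' (h a) = 0 ↔ h a = 0 := by rw [hloc'.ker, hass', Set.mem_singleton_iff]
      rw [← hker, ← hf'h, ← hφ, ← hsa, map_mul, hφ, (hunit s hs).mul_right_eq_zero]
    obtain ⟨s, hs, a, hsa⟩ := hloc.surj q
    exact ⟨fun hq => ⟨s, hs, a, (key s hs a hsa).1 hq, hsa⟩,
      fun ⟨s', hs', a', ha', hsa'⟩ => (key s' hs' a' hsa').2 ha'⟩

end Lift

section Quotient

variable {A B : Type*} [Ring A] [Ring B] {T : Set A} {h : A →+* B}

theorem isRegular_map_of_ker_primeRadicalSet (hh : Function.Surjective h)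
    (hker : ∀ a, h a = 0 ↔ a ∈ primeRadicalSet A) {t : A} (ht : IsNormalElement t)
    (havoid : ∀ P, IsMinimalPrimeIdealSet P → t ∉ P) : IsRegular (h t) := by
  refine isRegular_iff_eq_zero_of_mul.2 ⟨fun b hb => ?_, fun b hb => ?_⟩ <;>
    obtain ⟨a, rfl⟩ := hh b <;>
    rw [← map_mul, hker, mem_primeRadicalSet_iff] at hb <;>
    rw [hker, mem_primeRadicalSet_iff]
  · exact fun P hP => hP.1.mem_of_normal_mul_mem ht (havoid P hP) (hb P hP)
  · exact fun P hP => hP.1.mem_of_mul_normal_mem ht (havoid P hP) (hb P hP)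

theorem isDenominatorSet_map_of_ker_primeRadicalSet (hh : Function.Surjective h)
    (hker : ∀ a, h a = 0 ↔ a ∈ primeRadicalSet A) (hT : IsMulSet T)
    (hTn : ∀ t ∈ T, IsNormalElement t) (havoid : ∀ P, IsMinimalPrimeIdealSet P → ∀ t ∈ T, t ∉ P) :
    IsLeftDenominatorSet (h '' T) ∧ IsRightDenominatorSet (h '' T) ∧ lAss (h '' T) = {0} := by
  have : Nontrivial A := ⟨⟨0, 1, fun h01 => hT.2.1 (h01 ▸ hT.1)⟩⟩
  obtain ⟨P₀, hP₀⟩ := exists_isPrimeIdealSet (R := A)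
  obtain ⟨P, hP, -⟩ := hP₀.exists_minimal_subset
  refine isDenominatorSet_of_isRegular ⟨⟨1, hT.1, map_one h⟩, ?_, ?_⟩
    (isNormalElement_of_mem_image hh hTn) ?_
  · rintro ⟨t, ht, h0⟩
    exact havoid P hP t ht ((hker t).1 h0 P hP.1)
  · rintro _ ⟨s, hs, rfl⟩ _ ⟨t, ht, rfl⟩
    exact ⟨s * t, hT.2.2 s hs t ht, map_mul h s t⟩
  · rintro _ ⟨t, ht, rfl⟩
    exact isRegular_map_of_ker_primeRadicalSet hh hker (hTn t ht) fun P hP => havoid P hP t ht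

theorem minPrimes_eq_image_of_ker_primeRadicalSet (hh : Function.Surjective h)
    (hker : ∀ a, h a = 0 ↔ a ∈ primeRadicalSet A) : minPrimes B = (h '' ·) '' minPrimes A := by
  rw [minPrimes_eq_image hh hker]
  congr 1
  ext P
  exact isMinimalPrimeOver_primeRadicalSet_iff

end Quotient

theorem forall_isMinimalPrimeIdealSet_notMem {A : Type*} [Ring A] {T : Set A}
    (hfin : (minPrimes A).Finite) (hT : IsLeftDenominatorSet T) (hass : lAss T = {0})
    (hTn : ∀ t ∈ T, IsNormalElement t) : ∀ P, IsMinimalPrimeIdealSet P → ∀ t ∈ T, t ∉ P :=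
  fun _ hP t ht => hP.notMem_of_isNormalElement hfin (hTn t ht) (isRegular_of_mem hT hass ht)

universe u v w

theorem statement9_general {R : Type*} [Ring R]
    {S : Set R} (hnormal : ∀ s ∈ S, IsNormalElement s)
    (hfin : {p : Set R | IsMinimalPrimeOver (twoSidedAss S) p}.Finite)
    (A : Type u) [Ring A] (g : R →+* A) (hg : Function.Surjective g)
    (hgker : ∀ r : R, g r = 0 ↔ r ∈ twoSidedAss S)
    (hden : IsLeftDenominatorSet (g '' S) ∧ IsRightDenominatorSet (g '' S) ∧
      lAss (g '' S) = ({0} : Set A))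
    {Q : Type*} [Ring Q] (f : A →+* Q) (hf : IsLeftLocalization (g '' S) f) :
    ((∀ p : Set R, IsMinimalPrimeOver (twoSidedAss S) p →
        IsPrimeIdealSet (locSet f (g '' S) (g '' p))) ∧
      Set.InjOn (fun p : Set R => locSet f (g '' S) (g '' p))
        {p : Set R | IsMinimalPrimeOver (twoSidedAss S) p} ∧
      primeRadicalSet Q ⊆ locSet f (g '' S) (primeRadicalSet A)) ∧
    ∀ (B : Type v) [Ring B],
      ∀ h : A →+* B, Function.Surjective h →
        (∀ a : A, h a = 0 ↔ a ∈ primeRadicalSet A) →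
        (IsLeftDenominatorSet (h '' (g '' S)) ∧
          IsRightDenominatorSet (h '' (g '' S)) ∧
          lAss (h '' (g '' S)) = ({0} : Set B)) ∧
        ∀ (Q' : Type w) [Ring Q'],
          ∀ f' : B →+* Q', IsLeftLocalization (h '' (g '' S)) f' →
            (∃ φ : Q →+* Q', Function.Surjective φ ∧
                (∀ q : Q, φ q = 0 ↔ q ∈ locSet f (g '' S) (primeRadicalSet A)) ∧
                ∀ a : A, φ (f a) = f' (h a)) ∧
            minPrimes Q' =
              (fun p : Set R => locSet f' (h '' (g '' S)) (h '' (g '' p))) ''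
                {p : Set R | IsMinimalPrimeOver (twoSidedAss S) p} ∧
            Set.InjOn (fun p : Set R => locSet f' (h '' (g '' S)) (h '' (g '' p)))
              {p : Set R | IsMinimalPrimeOver (twoSidedAss S) p} := by
  obtain ⟨hTden, -, hass⟩ := hden
  have hTn := isNormalElement_of_mem_image hg hnormal
  have hminA := minPrimes_eq_image hg hgker
  have havoidA := forall_isMinimalPrimeIdealSet_notMem (hminA ▸ hfin.image _) hTden hass hTn
  have himgA (p) (hp : IsMinimalPrimeOver (twoSidedAss S) p) : IsMinimalPrimeIdealSet (g '' p) :=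
    isMinimalPrimeIdealSet_image hg hgker hp
  have hcontractA (p) (hp : IsMinimalPrimeOver (twoSidedAss S) p) : g ⁻¹' (g '' p) = p :=
    preimage_image_eq_of_ker_subset hp.1.1 fun r hr => hp.2.1 ((hgker r).1 hr)
  refine ⟨⟨fun p hp =>
      isPrimeIdealSet_locSet hTden.1 hTn hf hass (himgA p hp).1 (havoidA _ (himgA p hp)),
    Set.LeftInvOn.injOn (f₁' := fun X => g ⁻¹' (f ⁻¹' X)) fun p hp => by
      simp only [(himgA p hp).1.preimage_locSet hTn (havoidA _ (himgA p hp)) hTden.1.1 hf hass,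
        hcontractA p hp],
    primeRadicalSet_subset_locSet hTden.1 hTn hf hass havoidA⟩, fun B _ h hh hker => ?_⟩
  have hdenB := isDenominatorSet_map_of_ker_primeRadicalSet hh hker hTden.1 hTn havoidA
  have hTBn := isNormalElement_of_mem_image hh hTn
  have hminB := minPrimes_eq_image_of_ker_primeRadicalSet hh hker
  have hfinB : (minPrimes B).Finite := hminB ▸ hminA ▸ (hfin.image _).image _
  have havoidB := forall_isMinimalPrimeIdealSet_notMem hfinB hdenB.1 hdenB.2.2 hTBn
  have himgB (p) (hp : IsMinimalPrimeOver (twoSidedAss S) p) : h '' (g '' p) ∈ minPrimes B :=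
    hminB ▸ ⟨_, himgA p hp, rfl⟩
  refine ⟨hdenB, fun Q' _ f' hf' =>
    ⟨hf.exists_surjective_map hTden hh hker hdenB.2.2 hf', ?_, ?_⟩⟩
  · rw [minPrimes_eq_image_locSet hdenB.1.1 hTBn hf' hdenB.2.2 havoidB
      (primeRadicalSet_eq_zero_of_ker hh hker) hfinB, hminB, hminA, Set.image_image,
      Set.image_image]
  · refine Set.LeftInvOn.injOn (f₁' := fun X => g ⁻¹' (h ⁻¹' (f' ⁻¹' X))) fun p hp => ?_
    have hkerh : ∀ a, h a = 0 → a ∈ g '' p := fun a ha => (hker a).1 ha _ (himgA p hp).1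
    simp only [(himgB p hp).1.preimage_locSet hTBn (havoidB _ (himgB p hp)) hdenB.1.1.1 hf'
      hdenB.2.2, preimage_image_eq_of_ker_subset (himgA p hp).1.1 hkerh, hcontractA p hp]

/-- Let `S` be a multiplicative set of `R` generated by normal
elements, `𝔞 = twoSidedAss S`, `π = g : R → R̄` the projection with kernel
`𝔞`, `S̄ = g '' S` (a left and right denominator set of `R̄` with `ass = 0`)
and `f : R̄ → Q = S̄⁻¹R̄` the localization, with `min(𝔞)` finite.  Then:
(1) `𝔭 ↦ S̄⁻¹π(𝔭)` is an injection of `min(𝔞)` into `Spec(S̄⁻¹R̄)` and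
`𝔫_{S̄⁻¹R̄} ⊆ S̄⁻¹𝔫_{R̄}`; (2) for `π̃ = h : R̄ → R̃ = R̄/𝔫_{R̄}` and
`S̃ = h '' S̄`: `S̃` is a left and right denominator set of `R̃` with
`ass = 0`, `S̄⁻¹R̄ / S̄⁻¹𝔫_{R̄} ≅ S̃⁻¹R̃`, and `𝔭 ↦ S̃⁻¹π̃(π(𝔭))` is a
bijection of `min(𝔞)` onto `min(S̃⁻¹R̃)`. -/
theorem statement9 {R : Type*} [Ring R]
    {S : Set R} (hSmul : IsMulSet S) (hnormal : ∀ s ∈ S, IsNormalElement s)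
    (hfin : {p : Set R | IsMinimalPrimeOver (twoSidedAss S) p}.Finite)
    (A : Type u) [Ring A] (g : R →+* A) (hg : Function.Surjective g)
    (hgker : ∀ r : R, g r = 0 ↔ r ∈ twoSidedAss S)
    (hden : IsLeftDenominatorSet (g '' S) ∧ IsRightDenominatorSet (g '' S) ∧
      lAss (g '' S) = ({0} : Set A))
    {Q : Type*} [Ring Q] (f : A →+* Q) (hf : IsLeftLocalization (g '' S) f) :
    ((∀ p : Set R, IsMinimalPrimeOver (twoSidedAss S) p →
        IsPrimeIdealSet (locSet f (g '' S) (g '' p))) ∧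
      Set.InjOn (fun p : Set R => locSet f (g '' S) (g '' p))
        {p : Set R | IsMinimalPrimeOver (twoSidedAss S) p} ∧
      primeRadicalSet Q ⊆ locSet f (g '' S) (primeRadicalSet A)) ∧
    ∀ (B : Type v) [Ring B],
      ∀ h : A →+* B, Function.Surjective h →
        (∀ a : A, h a = 0 ↔ a ∈ primeRadicalSet A) →
        (IsLeftDenominatorSet (h '' (g '' S)) ∧
          IsRightDenominatorSet (h '' (g '' S)) ∧
          lAss (h '' (g '' S)) = ({0} : Set B)) ∧
        ∀ (Q' : Type w) [Ring Q'],
          ∀ f' : B →+* Q', IsLeftLocalization (h '' (g '' S)) f' →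
            (∃ φ : Q →+* Q', Function.Surjective φ ∧
                (∀ q : Q, φ q = 0 ↔ q ∈ locSet f (g '' S) (primeRadicalSet A)) ∧
                ∀ a : A, φ (f a) = f' (h a)) ∧
            minPrimes Q' =
              (fun p : Set R => locSet f' (h '' (g '' S)) (h '' (g '' p))) ''
                {p : Set R | IsMinimalPrimeOver (twoSidedAss S) p} ∧
            Set.InjOn (fun p : Set R => locSet f' (h '' (g '' S)) (h '' (g '' p)))
              {p : Set R | IsMinimalPrimeOver (twoSidedAss S) p} :=
  statement9_general hnormal hfin A g hg hgker hden f hf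

end BavulaMinPrimes
end

section
/- Let R be a ring, S ∈ Den_l(R, 𝔞) a left denominator set, and 𝔟 an ideal of R. Then the following statements are equivalent: (1) the left ideal S⁻¹𝔟 of the ring S⁻¹R is a two-sided ideal; (2) for all s ∈ S, 𝔟·s⁻¹ ⊆ S⁻¹𝔟; (3) if rs ∈ 𝔟 for some r ∈ R and s ∈ S, then s'r ∈ 𝔟 for some s' ∈ S; (4) if rs ∈ 𝔞 + 𝔟 for some r ∈ R and s ∈ S, then s'r ∈ 𝔞 + 𝔟 for some s' ∈ S; (5) for each s ∈ S, the ascending chain of left ideals 𝔟'_0 ⊆ 𝔟'_1 ⊆ ⋯ of S⁻¹R stabilizes, where 𝔟'_i := Σ_{j=0}^{i} S⁻¹𝔟·s^{-j}. -/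
/- Common framework: two-sided ideals, prime ideals, denominator sets and
   left localizations of (possibly noncommutative) rings, described
   axiomatically via their characteristic properties. -/

namespace BavulaMinPrimes

/- The localization `S⁻¹𝔟` is always a left ideal of `S⁻¹R`, so (1) amounts to closure under
right multiplication by the fractions `f(s)⁻¹`, which is (2).  An element `f r` lies in `S⁻¹𝔟`
exactly when `t r ∈ 𝔟` for some `t ∈ S`; applied to `f r = f (r s) f(s)⁻¹` this turns (1) into
(3), and the Ore condition turns (3) back into (2).  Since `𝔞` is killed by elements of `S`,
enlarging `𝔟` to `𝔞 + 𝔟` does not change (3), which gives (4).  If `S⁻¹𝔟` is an ideal, the chain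
in (5) is constant; conversely, if `𝔟'_{n+1} = 𝔟'_n`, then `f(x) s⁻ⁿ⁻¹ ∈ 𝔟'_n`, and multiplying by
`sⁿ` on the right shows `f(x) s⁻¹ ∈ S⁻¹𝔟`. -/

/-- The reversibility axiom of a left denominator set, for the image of `S` in `R / I`. -/
def IsLeftReversibleMod {R : Type*} [Ring R] (S I : Set R) : Prop :=
  ∀ r : R, ∀ s ∈ S, r * s ∈ I → ∃ s' ∈ S, s' * r ∈ I

/-- The left ideal `𝔟'_m = Σ_{j ≤ m} S⁻¹𝔟 s^{-j}`, with `y = s⁻¹`. -/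
def locSetChain {R Q : Type*} [Ring R] [Ring Q] (f : R →+* Q) (S b : Set R) (y : Q) (m : ℕ) :
    Set Q :=
  { q : Q | ∃ c : ℕ → Q, (∀ j, c j ∈ locSet f S b) ∧
      q = ∑ j ∈ Finset.range (m + 1), c j * y ^ j }

section LocSet

variable {R Q : Type*} [Ring R] [Ring Q] {S : Set R} {f : R →+* Q} {b : Set R}

theorem map_mem_locSet (hS : IsLeftDenominatorSet S) {x : R} (hx : x ∈ b) :
    f x ∈ locSet f S b :=
  ⟨1, hS.1.1, x, hx, by rw [map_one, one_mul]⟩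

theorem mul_map_mem_locSet (hb : IsIdealSet b) {q : Q} (hq : q ∈ locSet f S b) (r : R) :
    q * f r ∈ locSet f S b := by
  obtain ⟨s, hs, a, ha, e⟩ := hq
  exact ⟨s, hs, a * r, (hb.2.2.2 a ha r).2, by rw [← mul_assoc, e, ← map_mul]⟩

theorem mem_locSet_of_map_mul_mem (hS : IsLeftDenominatorSet S) {s : R} (hs : s ∈ S) {q : Q}
    (h : f s * q ∈ locSet f S b) : q ∈ locSet f S b := by
  obtain ⟨t, ht, a, ha, e⟩ := h
  exact ⟨t * s, hS.1.2.2 t ht s hs, a, ha, by rw [map_mul, mul_assoc, e]⟩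

/-- Closure under addition is where the Ore condition provides a common denominator. -/
def locAddSubgroup (hS : IsLeftDenominatorSet S) (hb : IsIdealSet b) : AddSubgroup Q where
  carrier := locSet f S b
  zero_mem' := ⟨1, hS.1.1, 0, hb.1, by rw [mul_zero, map_zero]⟩
  add_mem' := by
    rintro q₁ q₂ ⟨s₁, hs₁, a₁, ha₁, e₁⟩ ⟨s₂, hs₂, a₂, ha₂, e₂⟩
    obtain ⟨t, ht, r, hr⟩ := hS.2.1 s₁ s₂ hs₂
    refine ⟨t * s₁, hS.1.2.2 t ht s₁ hs₁, t * a₁ + r * a₂,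
      hb.2.1 _ (hb.2.2.2 a₁ ha₁ t).1 _ (hb.2.2.2 a₂ ha₂ r).1, ?_⟩
    calc f (t * s₁) * (q₁ + q₂) = f (t * s₁) * q₁ + f (r * s₂) * q₂ := by rw [mul_add, hr]
      _ = f t * (f s₁ * q₁) + f r * (f s₂ * q₂) := by simp only [map_mul, mul_assoc]
      _ = f (t * a₁ + r * a₂) := by rw [e₁, e₂, map_add, map_mul, map_mul]
  neg_mem' := by
    rintro q ⟨s, hs, a, ha, e⟩
    exact ⟨s, hs, -a, hb.2.2.1 a ha, by rw [mul_neg, e, map_neg]⟩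

theorem mul_mem_locSet (hS : IsLeftDenominatorSet S) (hb : IsIdealSet b)
    (hf : IsLeftLocalization S f) (p : Q) {q : Q} (hq : q ∈ locSet f S b) :
    p * q ∈ locSet f S b := by
  obtain ⟨s, hs, a, ha, e⟩ := hq
  obtain ⟨t, ht, r, hr⟩ := hf.surj p
  obtain ⟨s₁, hs₁, r₁, h₁⟩ := hS.2.1 r s hs
  refine ⟨s₁ * t, hS.1.2.2 s₁ hs₁ t ht, r₁ * a, (hb.2.2.2 a ha r₁).1, ?_⟩
  calc f (s₁ * t) * (p * q) = f (s₁ * r) * q := by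
        rw [map_mul, map_mul, ← hr, mul_assoc, mul_assoc, mul_assoc]
    _ = f (r₁ * a) := by rw [h₁, map_mul, map_mul, mul_assoc, e]

theorem isIdealSet_locSet_iff (hS : IsLeftDenominatorSet S) (hb : IsIdealSet b)
    (hf : IsLeftLocalization S f) :
    IsIdealSet (locSet f S b) ↔ ∀ q ∈ locSet f S b, ∀ p : Q, q * p ∈ locSet f S b := by
  let B := locAddSubgroup (f := f) hS hb
  refine ⟨fun hI q hq p => (hI.2.2.2 q hq p).2, fun h => ⟨B.zero_mem, fun _ h₁ _ h₂ =>
    B.add_mem h₁ h₂, fun _ hq => B.neg_mem hq, fun q hq p => ⟨mul_mem_locSet hS hb hf p hq, h q hq p⟩⟩⟩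

theorem map_mem_locSet_iff (hS : IsLeftDenominatorSet S) (hb : IsIdealSet b)
    (hf : IsLeftLocalization S f) {r : R} :
    f r ∈ locSet f S b ↔ ∃ t ∈ S, t * r ∈ b := by
  constructor
  · rintro ⟨s, hs, a, ha, e⟩
    obtain ⟨t, ht, hta⟩ : s * r - a ∈ lAss S := by
      rw [← hf.ker, map_sub, map_mul, e, sub_self]
    refine ⟨t * s, hS.1.2.2 t ht s hs, ?_⟩
    rw [mul_sub, sub_eq_zero] at hta
    rw [mul_assoc, hta]
    exact (hb.2.2.2 a ha t).1
  · rintro ⟨t, ht, htr⟩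
    exact ⟨t, ht, t * r, htr, (map_mul f t r).symm⟩

theorem isLeftReversibleMod_of_isIdealSet_locSet (hS : IsLeftDenominatorSet S)
    (hb : IsIdealSet b) (hf : IsLeftLocalization S f) (hI : IsIdealSet (locSet f S b)) :
    IsLeftReversibleMod S b := by
  intro r s hs hrs
  obtain ⟨u, hu⟩ := hf.isUnit s hs
  have hfr : f (r * s) * ↑u⁻¹ = f r := by
    rw [map_mul, ← hu, mul_assoc, Units.mul_inv, mul_one]
  rw [← map_mem_locSet_iff hS hb hf, ← hfr]
  exact (hI.2.2.2 _ (map_mem_locSet hS hrs) _).2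

theorem map_mul_mem_locSet_of_isLeftReversibleMod (hS : IsLeftDenominatorSet S)
    (hb : IsIdealSet b) (h : IsLeftReversibleMod S b) {s : R} (hs : s ∈ S) {y : Q}
    (hy : f s * y = 1) {x : R} (hx : x ∈ b) : f x * y ∈ locSet f S b := by
  obtain ⟨s₁, hs₁, r₁, h₁⟩ := hS.2.1 x s hs
  obtain ⟨s', hs', hr₁⟩ := h r₁ s hs (h₁ ▸ (hb.2.2.2 x hx s₁).1)
  refine ⟨s' * s₁, hS.1.2.2 s' hs' s₁ hs₁, s' * r₁, hr₁, ?_⟩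
  calc f (s' * s₁) * (f x * y) = f s' * f (s₁ * x) * y := by
        rw [map_mul, map_mul, mul_assoc, mul_assoc, mul_assoc]
    _ = f (s' * r₁) := by rw [h₁, map_mul, map_mul, mul_assoc, mul_assoc, hy, mul_one]

theorem isIdealSet_locSet_of_map_mul_mem (hS : IsLeftDenominatorSet S) (hb : IsIdealSet b)
    (hf : IsLeftLocalization S f)
    (h : ∀ s ∈ S, ∀ y : Q, f s * y = 1 → y * f s = 1 → ∀ x ∈ b, f x * y ∈ locSet f S b) :
    IsIdealSet (locSet f S b) := by
  refine (isIdealSet_locSet_iff hS hb hf).2 fun q hq p => ?_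
  obtain ⟨t, ht, r, hr⟩ := hf.surj p
  obtain ⟨u, hu⟩ := hf.isUnit t ht
  have hp : p = ↑u⁻¹ * f r := by rw [← hr, ← hu, ← mul_assoc, Units.inv_mul, one_mul]
  obtain ⟨s, hs, a, ha, e⟩ := hq
  have hqu : q * ↑u⁻¹ ∈ locSet f S b := by
    refine mem_locSet_of_map_mul_mem hS hs ?_
    rw [← mul_assoc, e]
    exact h t ht _ (by rw [← hu, Units.mul_inv]) (by rw [← hu, Units.inv_mul]) a ha
  rw [hp, ← mul_assoc]
  exact mul_map_mem_locSet hb hqu r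

theorem exists_mul_mem_of_eq_add (hb : IsIdealSet b) {x : R}
    (hx : ∃ a ∈ lAss S, ∃ c ∈ b, x = a + c) : ∃ t ∈ S, t * x ∈ b := by
  obtain ⟨a, ⟨t, ht, hta⟩, c, hc, rfl⟩ := hx
  exact ⟨t, ht, by rw [mul_add, hta, zero_add]; exact (hb.2.2.2 c hc t).1⟩

theorem isLeftReversibleMod_lAss_add_iff (hS : IsLeftDenominatorSet S) (hb : IsIdealSet b) :
    IsLeftReversibleMod S { x | ∃ a ∈ lAss S, ∃ c ∈ b, x = a + c } ↔
      IsLeftReversibleMod S b := by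
  have hmem : ∀ {x : R}, x ∈ b → ∃ a ∈ lAss S, ∃ c ∈ b, x = a + c :=
    fun {x} hx => ⟨0, ⟨1, hS.1.1, mul_zero 1⟩, x, hx, (zero_add x).symm⟩
  constructor
  · intro h r s hs hrs
    obtain ⟨s', hs', hr⟩ := h r s hs (hmem hrs)
    obtain ⟨t, ht, htr⟩ := exists_mul_mem_of_eq_add hb hr
    exact ⟨t * s', hS.1.2.2 t ht s' hs', by rwa [mul_assoc]⟩
  · intro h r s hs hrs
    obtain ⟨t, ht, htr⟩ := exists_mul_mem_of_eq_add hb hrs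
    obtain ⟨s', hs', hr⟩ := h (t * r) s hs (by rwa [mul_assoc])
    exact ⟨s' * t, hS.1.2.2 s' hs' t ht, hmem (by rwa [mul_assoc])⟩

theorem mul_pow_mem_locSetChain (hS : IsLeftDenominatorSet S) (hb : IsIdealSet b) {q : Q}
    (hq : q ∈ locSet f S b) (y : Q) {j m : ℕ} (hj : j ≤ m) :
    q * y ^ j ∈ locSetChain f S b y m := by
  classical
  refine ⟨fun i => if i = j then q else 0, fun i => ?_, ?_⟩
  · dsimp only
    split_ifs
    exacts [hq, (locAddSubgroup hS hb).zero_mem]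
  · simp only [ite_mul, zero_mul, Finset.sum_ite_eq', Finset.mem_range,
      Nat.lt_succ_of_le hj, if_true]

theorem locSetChain_eq_locSet (hS : IsLeftDenominatorSet S) (hb : IsIdealSet b)
    (hI : IsIdealSet (locSet f S b)) (y : Q) (m : ℕ) :
    locSetChain f S b y m = locSet f S b := by
  ext q
  constructor
  · rintro ⟨c, hc, rfl⟩
    exact (locAddSubgroup (f := f) hS hb).sum_mem fun j _ => (hI.2.2.2 _ (hc j) _).2
  · intro hq
    simpa using mul_pow_mem_locSetChain hS hb hq y (Nat.zero_le m)

theorem mul_map_pow_mem_locSet_of_mem_locSetChain (hS : IsLeftDenominatorSet S)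
    (hb : IsIdealSet b) {s : R} {y : Q} (hy : y * f s = 1) {n : ℕ} {q : Q}
    (hq : q ∈ locSetChain f S b y n) : q * f s ^ n ∈ locSet f S b := by
  obtain ⟨c, hc, rfl⟩ := hq
  rw [Finset.sum_mul]
  refine (locAddSubgroup (f := f) hS hb).sum_mem fun j hj => ?_
  obtain ⟨k, rfl⟩ := Nat.exists_eq_add_of_le (Nat.lt_succ_iff.mp (Finset.mem_range.mp hj))
  have hpow : y ^ j * f s ^ (j + k) = f (s ^ k) := by
    rw [pow_add, ← mul_assoc, pow_mul_pow_eq_one j hy, one_mul, map_pow]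
  rw [mul_assoc, hpow]
  exact mul_map_mem_locSet hb (hc j) _

theorem map_mul_mem_locSet_of_locSetChain_succ_eq (hS : IsLeftDenominatorSet S)
    (hb : IsIdealSet b) {s : R} {y : Q} (hy : y * f s = 1) {n : ℕ}
    (hn : locSetChain f S b y (n + 1) = locSetChain f S b y n) {x : R} (hx : x ∈ b) :
    f x * y ∈ locSet f S b := by
  have hmem : f x * y ^ (n + 1) ∈ locSetChain f S b y n :=
    hn ▸ mul_pow_mem_locSetChain hS hb (map_mem_locSet hS hx) y le_rfl
  have hxy : f x * y ^ (n + 1) * f s ^ n = f x * y := by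
    rw [pow_succ', mul_assoc, mul_assoc, pow_mul_pow_eq_one n hy, mul_one]
  rw [← hxy]
  exact mul_map_pow_mem_locSet_of_mem_locSetChain hS hb hy hmem

end LocSet

/-- Let `S ∈ Den_l(R, 𝔞)` and `𝔟` an ideal of `R`.  TFAE:
(1) the left ideal `S⁻¹𝔟` of `S⁻¹R` is a two-sided ideal;
(2) `𝔟 s⁻¹ ⊆ S⁻¹𝔟` for all `s ∈ S`;
(3) `r s ∈ 𝔟` (with `s ∈ S`) implies `s' r ∈ 𝔟` for some `s' ∈ S`;
(4) `r s ∈ 𝔞 + 𝔟` (with `s ∈ S`) implies `s' r ∈ 𝔞 + 𝔟` for some `s' ∈ S`;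
(5) for each `s ∈ S`, the ascending chain of left ideals
`𝔟'_i = Σ_{j≤i} S⁻¹𝔟 s^{-j}` of `S⁻¹R` stabilizes. -/
theorem statement13 {R Q : Type*} [Ring R] [Ring Q]
    {S : Set R} (hS : IsLeftDenominatorSet S) {A : Set R} (hass : lAss S = A)
    (f : R →+* Q) (hf : IsLeftLocalization S f)
    {b : Set R} (hb : IsIdealSet b) :
    (IsIdealSet (locSet f S b) ↔
      ∀ s ∈ S, ∀ y : Q, f s * y = 1 → y * f s = 1 →
        ∀ x ∈ b, f x * y ∈ locSet f S b) ∧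
    (IsIdealSet (locSet f S b) ↔
      ∀ r : R, ∀ s ∈ S, r * s ∈ b → ∃ s' ∈ S, s' * r ∈ b) ∧
    (IsIdealSet (locSet f S b) ↔
      ∀ r : R, ∀ s ∈ S, (∃ a ∈ A, ∃ c ∈ b, r * s = a + c) →
        ∃ s' ∈ S, ∃ a ∈ A, ∃ c ∈ b, s' * r = a + c) ∧
    (IsIdealSet (locSet f S b) ↔
      ∀ s ∈ S, ∀ y : Q, f s * y = 1 → y * f s = 1 →
        ∃ n : ℕ, ∀ m : ℕ, n ≤ m →
          { q : Q | ∃ c : ℕ → Q, (∀ j, c j ∈ locSet f S b) ∧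
              q = ∑ j ∈ Finset.range (m + 1), c j * y ^ j } =
          { q : Q | ∃ c : ℕ → Q, (∀ j, c j ∈ locSet f S b) ∧
              q = ∑ j ∈ Finset.range (n + 1), c j * y ^ j }) := by
  subst hass
  have h13 := isLeftReversibleMod_of_isIdealSet_locSet hS hb hf
  have h32 : IsLeftReversibleMod S b → ∀ s ∈ S, ∀ y : Q, f s * y = 1 → y * f s = 1 →
      ∀ x ∈ b, f x * y ∈ locSet f S b := fun h _ hs _ hy _ _ hx =>
    map_mul_mem_locSet_of_isLeftReversibleMod hS hb h hs hy hx
  have h21 := isIdealSet_locSet_of_map_mul_mem hS hb hf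
  have h34 := isLeftReversibleMod_lAss_add_iff hS hb
  refine ⟨⟨h32 ∘ h13, h21⟩, ⟨h13, h21 ∘ h32⟩, ⟨h34.2 ∘ h13, h21 ∘ h32 ∘ h34.1⟩,
    fun hI _ _ y _ _ => ⟨0, fun m _ => ?_⟩, fun h5 => h21 fun s hs y hsy hys x hx => ?_⟩
  · exact (locSetChain_eq_locSet hS hb hI y m).trans (locSetChain_eq_locSet hS hb hI y 0).symm
  · obtain ⟨n, hn⟩ := h5 s hs y hsy hys
    exact map_mul_mem_locSet_of_locSetChain_succ_eq hS hb hys (hn (n + 1) n.le_succ) hx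

end BavulaMinPrimes
end
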